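/- arXiv:0802.2475 — 2 statements merged into one kernel-verified Lean document; each statement's English description precedes it below -/
import Mathlib

section
/- If f(z) = ∫₀¹ dμ(t)/(1-tz) for a probability measure μ on [0,1] and γ ≤ 1 is fixed, then the function y ↦ |f(γ+iy)| is monotonically decreasing on (0,∞). -/
open MeasureTheory Complex ComplexConjugate

/-!
Expanding `‖f z‖² = f z * conj (f z)` as a double integral over `μ ⊗ μ` writes `‖f (γ + iy)‖²` as the
integral of `Re ((1 - t z)⁻¹ * conj (1 - s z)⁻¹)`. With `a = 1 - tγ`, `b = 1 - sγ` (nonnegative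
because `γ ≤ 1`) and `v = y²` this integrand is `(ab + tsv) / ((a² + t²v)(b² + s²v))`, which is
antitone in `v > 0` for all `a, b, t, s ≥ 0`. The bound `|Im z| ≤ |z| |1 - tz|` keeps the
integrands bounded for `Im z ≠ 0`.
-/

lemma sq_add_sq_mul_pos {a t v : ℝ} (hv : 0 < v) (h : 0 < a ∨ 0 < t) : 0 < a ^ 2 + t ^ 2 * v := by
  rcases h with h | h
  · exact add_pos_of_pos_of_nonneg (pow_pos h 2) (by positivity)
  · exact add_pos_of_nonneg_of_pos (sq_nonneg a) (by positivity)

lemma div_mul_antitoneOn {a b t s : ℝ} (ha : 0 ≤ a) (hb : 0 ≤ b) (ht : 0 ≤ t) (hs : 0 ≤ s)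
    (hat : 0 < a ∨ 0 < t) (hbs : 0 < b ∨ 0 < s) :
    AntitoneOn (fun v : ℝ => (a * b + t * s * v) / ((a ^ 2 + t ^ 2 * v) * (b ^ 2 + s ^ 2 * v)))
      (Set.Ioi 0) := by
  have hden : ∀ v : ℝ, 0 < v → 0 < (a ^ 2 + t ^ 2 * v) * (b ^ 2 + s ^ 2 * v) := fun v hv =>
    mul_pos (sq_add_sq_mul_pos hv hat) (sq_add_sq_mul_pos hv hbs)
  intro u hu v hv huv
  rw [Set.mem_Ioi] at hu hv
  dsimp only
  rw [div_le_div_iff₀ (hden v hv) (hden u hu)]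
  have hcross : 0 ≤ a ^ 2 * s ^ 2 + b ^ 2 * t ^ 2 - a * b * t * s := by
    nlinarith [sq_nonneg (a * s - b * t), mul_nonneg (mul_nonneg (mul_nonneg ha hb) ht) hs]
  -- the difference of the cross products is `(v - u)` times this nonnegative polynomial
  have hE : 0 ≤ a * b * (a ^ 2 * s ^ 2 + b ^ 2 * t ^ 2 - a * b * t * s)
      + a * b * t ^ 2 * s ^ 2 * (u + v) + t ^ 3 * s ^ 3 * (u * v) := by
    have := mul_nonneg (mul_nonneg ha hb) hcross
    have : 0 ≤ a * b * t ^ 2 * s ^ 2 * (u + v) := by positivity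
    have : 0 ≤ t ^ 3 * s ^ 3 * (u * v) := by positivity
    linarith
  nlinarith [mul_nonneg (sub_nonneg.2 huv) hE]

lemma abs_im_le_norm_mul_norm_one_sub_ofReal_mul (z : ℂ) (t : ℝ) :
    |z.im| ≤ ‖z‖ * ‖1 - t * z‖ :=
  calc |z.im| = |(conj z * (1 - t * z)).im| := by
        rw [← abs_neg]
        congr 1
        simp only [mul_im, sub_re, sub_im, one_re, one_im, mul_re, ofReal_re, ofReal_im, conj_re,
          conj_im]
        ring
    _ ≤ ‖conj z * (1 - t * z)‖ := abs_im_le_norm _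
    _ = ‖z‖ * ‖1 - t * z‖ := by rw [norm_mul, RCLike.norm_conj]

lemma one_sub_ofReal_mul_ne_zero {z : ℂ} (hz : z.im ≠ 0) (t : ℝ) : 1 - t * z ≠ 0 := fun h =>
  hz (abs_nonpos_iff.1 (by simpa [h] using abs_im_le_norm_mul_norm_one_sub_ofReal_mul z t))

lemma norm_inv_one_sub_ofReal_mul_le {z : ℂ} (hz : z.im ≠ 0) (t : ℝ) :
    ‖(1 - t * z)⁻¹‖ ≤ ‖z‖ / |z.im| := by
  have hz0 : 0 < ‖z‖ := norm_pos_iff.2 fun h => hz (by simp [h])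
  rw [norm_inv, inv_le_comm₀ (norm_pos_iff.2 (one_sub_ofReal_mul_ne_zero hz t))
    (div_pos hz0 (abs_pos.2 hz)), inv_div, div_le_iff₀ hz0, mul_comm]
  exact abs_im_le_norm_mul_norm_one_sub_ofReal_mul z t

lemma integrable_inv_one_sub_ofReal_mul {μ : Measure ℝ} [IsFiniteMeasure μ] {z : ℂ}
    (hz : z.im ≠ 0) : Integrable (fun t : ℝ => (1 - t * z)⁻¹) μ := by
  refine Integrable.mono' (integrable_const (‖z‖ / |z.im|)) ?_
    (ae_of_all _ (norm_inv_one_sub_ofReal_mul_le hz))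
  exact (Continuous.inv₀ (by fun_prop) (one_sub_ofReal_mul_ne_zero hz)).aestronglyMeasurable

section Prod

variable {α : Type*} [MeasurableSpace α] {μ : Measure α} {g : α → ℂ}

lemma MeasureTheory.Integrable.mul_conj_prod (hg : Integrable g μ) :
    Integrable (fun p : α × α => g p.1 * conj (g p.2)) (μ.prod μ) :=
  hg.mul_prod ((conjCLE : ℂ →L[ℝ] ℂ).integrable_comp hg)

lemma normSq_integral_eq_integral_prod [SFinite μ] (hg : Integrable g μ) :
    normSq (∫ x, g x ∂μ) = ∫ p, (g p.1 * conj (g p.2)).re ∂μ.prod μ :=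
  calc normSq (∫ x, g x ∂μ) = ((∫ x, g x ∂μ) * conj (∫ x, g x ∂μ)).re := by
        rw [mul_conj, ofReal_re]
    _ = (∫ p, g p.1 * conj (g p.2) ∂μ.prod μ).re := by
        rw [integral_prod_mul g (fun x => conj (g x)), integral_conj]
    _ = ∫ p, (g p.1 * conj (g p.2)).re ∂μ.prod μ := (integral_re hg.mul_conj_prod).symm

end Prod

lemma re_inv_one_sub_mul_conj_inv (γ y t s : ℝ) :
    ((1 - t * (γ + y * I))⁻¹ * conj (1 - s * (γ + y * I))⁻¹).re =
      ((1 - t * γ) * (1 - s * γ) + t * s * y ^ 2) /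
        (((1 - t * γ) ^ 2 + t ^ 2 * y ^ 2) * ((1 - s * γ) ^ 2 + s ^ 2 * y ^ 2)) := by
  rw [map_inv₀, ← mul_inv, inv_re, normSq_apply]
  simp only [mul_re, mul_im, sub_re, sub_im, add_re, add_im, one_re, one_im, ofReal_re,
    ofReal_im, I_re, I_im, conj_re, conj_im]
  ring

lemma re_inv_one_sub_mul_conj_inv_antitoneOn {γ t s : ℝ} (ht : 0 ≤ t) (hs : 0 ≤ s)
    (htγ : t * γ ≤ 1) (hsγ : s * γ ≤ 1) :
    AntitoneOn (fun y : ℝ => ((1 - t * (γ + y * I))⁻¹ * conj (1 - s * (γ + y * I))⁻¹).re)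
      (Set.Ioi 0) := by
  have hpos : ∀ {r : ℝ}, 0 ≤ r → 0 < 1 - r * γ ∨ 0 < r := fun hr =>
    (eq_or_lt_of_le hr).imp (fun h => by simp [← h]) id
  intro y₁ hy₁ y₂ hy₂ hy
  rw [Set.mem_Ioi] at hy₁ hy₂
  simp only [re_inv_one_sub_mul_conj_inv]
  exact div_mul_antitoneOn (sub_nonneg.2 htγ) (sub_nonneg.2 hsγ) ht hs (hpos ht) (hpos hs)
    (pow_pos hy₁ 2) (pow_pos hy₂ 2) (pow_le_pow_left₀ (le_of_lt hy₁) hy 2)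

theorem stmt1 (μ : Measure ℝ) [IsProbabilityMeasure μ]
    (hμ : μ (Set.Icc (0:ℝ) 1)ᶜ = 0)
    (f : ℂ → ℂ) (hf : ∀ z : ℂ, f z = ∫ t, (1 - (t:ℂ) * z)⁻¹ ∂μ)
    (γ : ℝ) (hγ : γ ≤ 1) :
    AntitoneOn (fun y : ℝ => ‖f ((γ:ℂ) + y * Complex.I)‖) (Set.Ioi 0) := by
  have hae : ∀ᵐ t ∂μ, t ∈ Set.Icc (0:ℝ) 1 := mem_ae_iff.2 hμ
  have hae₂ : ∀ᵐ p ∂μ.prod μ, p.1 ∈ Set.Icc (0:ℝ) 1 ∧ p.2 ∈ Set.Icc (0:ℝ) 1 :=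
    (Measure.quasiMeasurePreserving_fst.ae hae).and (Measure.quasiMeasurePreserving_snd.ae hae)
  have hint : ∀ y : ℝ, 0 < y → Integrable (fun t : ℝ => (1 - t * ((γ:ℂ) + y * I))⁻¹) μ :=
    fun y hy => integrable_inv_one_sub_ofReal_mul (by simpa using hy.ne')
  intro y₁ hy₁ y₂ hy₂ hy
  rw [← sq_le_sq₀ (norm_nonneg _) (norm_nonneg _), ← normSq_eq_norm_sq, ← normSq_eq_norm_sq, hf,
    hf, normSq_integral_eq_integral_prod (hint y₁ hy₁),
    normSq_integral_eq_integral_prod (hint y₂ hy₂)]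
  refine integral_mono_ae (hint y₂ hy₂).mul_conj_prod.re (hint y₁ hy₁).mul_conj_prod.re ?_
  filter_upwards [hae₂] with p ⟨⟨ht₀, ht₁⟩, ⟨hs₀, hs₁⟩⟩
  exact re_inv_one_sub_mul_conj_inv_antitoneOn ht₀ hs₀ (by nlinarith) (by nlinarith) hy₁ hy₂ hy
end

section
/- If f, g ∈ 𝒯, then |f(iy)| ≤ |(f*g)(iy)| for all y > 0. -/
/-!
Since ρ has the moments of the law of `s * t` under `μ ⊗ ν`, the Weierstrass theorem identifies
the two measures, so `(f*g)(iy) = ∫ f(ity) dν(t)`. It therefore suffices that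
`Re (f(ity) * conj f(iy)) ≥ |f(iy)|²` for `t ∈ [0, 1]`. With `k x = (1 - i x)⁻¹` the difference of
the two sides is an integral over `μ ⊗ μ`; after symmetrising the integrand in its two variables
it becomes pointwise nonnegative, because `Re (k a * conj (k b)) = (1 + a b) / ((1 + a²) (1 + b²))`
and the symmetrised expression factors as `1 - t` times a rational function with nonnegative
numerator and denominator for `a, b ≥ 0`.
-/

open MeasureTheory Complex Set ComplexConjugate

lemma ContinuousOn.integrable_of_ae_mem {X E : Type*} [MeasurableSpace X] [TopologicalSpace X]
    [OpensMeasurableSpace X] [T2Space X] [NormedAddCommGroup E] {μ : Measure X} [IsFiniteMeasure μ]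
    {K : Set X} {f : X → E} (hK : IsCompact K) (hf : ContinuousOn f K) (hμ : ∀ᵐ x ∂μ, x ∈ K) :
    Integrable f μ := by
  simpa [IntegrableOn, Measure.restrict_eq_self_of_ae_mem hμ] using
    hf.integrableOn_compact hK (μ := μ)

section Moments

variable {a b : ℝ} {μ ν : Measure ℝ} [IsFiniteMeasure μ] [IsFiniteMeasure ν]

lemma integral_eval_eq_sum_coeff_mul_moment (hμ : ∀ᵐ x ∂μ, x ∈ Icc a b) (q : Polynomial ℝ) :
    ∫ x, q.eval x ∂μ = ∑ i ∈ Finset.range (q.natDegree + 1), q.coeff i * ∫ x, x ^ i ∂μ := by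
  simp_rw [Polynomial.eval_eq_sum_range]
  rw [integral_finsetSum _ fun i _ => ((continuous_pow i).continuousOn.integrable_of_ae_mem
    isCompact_Icc hμ).const_mul _]
  simp_rw [integral_const_mul]

lemma dist_integral_le_of_ae_mem_Icc {g h : ℝ → ℝ} {ε : ℝ} (hμ : ∀ᵐ x ∂μ, x ∈ Icc a b)
    (hg : ContinuousOn g (Icc a b)) (hh : ContinuousOn h (Icc a b))
    (hgh : ∀ x ∈ Icc a b, |g x - h x| ≤ ε) :
    dist (∫ x, g x ∂μ) (∫ x, h x ∂μ) ≤ ε * μ.real univ := by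
  rw [dist_eq_norm, ← integral_sub (hg.integrable_of_ae_mem isCompact_Icc hμ)
    (hh.integrable_of_ae_mem isCompact_Icc hμ)]
  exact norm_integral_le_of_norm_le_const (hμ.mono fun x hx => hgh x hx)

theorem Measure.ext_of_integral_pow_eq (hμ : ∀ᵐ x ∂μ, x ∈ Icc a b) (hν : ∀ᵐ x ∂ν, x ∈ Icc a b)
    (h : ∀ k : ℕ, ∫ x, x ^ k ∂μ = ∫ x, x ^ k ∂ν) : μ = ν := by
  refine ext_of_forall_integral_eq_of_IsFiniteMeasure fun f => eq_of_forall_dist_le fun ε hε => ?_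
  set C := μ.real univ + ν.real univ + 1
  have hC : 0 < C := by positivity
  obtain ⟨q, hq⟩ := exists_polynomial_near_of_continuousOn a b f f.continuous.continuousOn
    (ε / C) (div_pos hε hC)
  have hqf : ∀ x ∈ Icc a b, |f x - q.eval x| ≤ ε / C := fun x hx => by
    rw [abs_sub_comm]; exact (hq x hx).le
  have hq_eq : ∫ x, q.eval x ∂μ = ∫ x, q.eval x ∂ν := by
    simp_rw [integral_eval_eq_sum_coeff_mul_moment hμ, integral_eval_eq_sum_coeff_mul_moment hν, h]
  calc dist (∫ x, f x ∂μ) (∫ x, f x ∂ν)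
      ≤ dist (∫ x, f x ∂μ) (∫ x, q.eval x ∂μ) + dist (∫ x, q.eval x ∂ν) (∫ x, f x ∂ν) := by
        rw [← hq_eq]; exact dist_triangle _ _ _
    _ ≤ ε / C * μ.real univ + ε / C * ν.real univ := by
        gcongr
        · exact dist_integral_le_of_ae_mem_Icc hμ f.continuous.continuousOn
            q.continuous.continuousOn hqf
        · rw [dist_comm]
          exact dist_integral_le_of_ae_mem_Icc hν f.continuous.continuousOn
            q.continuous.continuousOn hqf
    _ ≤ ε := by
        rw [← mul_add, div_mul_eq_mul_div, div_le_iff₀ hC]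
        nlinarith

end Moments

lemma integral_pow_map_mul_prod (μ ν : Measure ℝ) [SFinite μ] [SFinite ν] (k : ℕ) :
    ∫ x, x ^ k ∂(μ.prod ν).map (fun p => p.1 * p.2) = (∫ x, x ^ k ∂μ) * ∫ x, x ^ k ∂ν := by
  rw [integral_map (by fun_prop) (by fun_prop)]
  simp_rw [mul_pow]
  exact integral_prod_mul (fun x : ℝ => x ^ k) (fun x : ℝ => x ^ k)

lemma ae_mem_Icc_map_mul_prod {μ ν : Measure ℝ} (hμ : ∀ᵐ x ∂μ, x ∈ Icc (0 : ℝ) 1)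
    (hν : ∀ᵐ x ∂ν, x ∈ Icc (0 : ℝ) 1) :
    ∀ᵐ x ∂(μ.prod ν).map (fun p => p.1 * p.2), x ∈ Icc (0 : ℝ) 1 := by
  refine (ae_map_iff (by fun_prop) measurableSet_Icc).mpr ?_
  filter_upwards [Measure.quasiMeasurePreserving_fst.ae hμ,
    Measure.quasiMeasurePreserving_snd.ae hν] with p ⟨hs0, hs1⟩ ⟨ht0, ht1⟩
  exact ⟨mul_nonneg hs0 ht0, mul_le_one₀ hs1 ht0 ht1⟩

lemma integral_nonneg_of_add_swap_nonneg {α : Type*} [MeasurableSpace α] {μ : Measure α}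
    [SFinite μ] {Φ : α × α → ℝ} (hΦ : Integrable Φ (μ.prod μ))
    (h : ∀ᵐ p ∂μ.prod μ, 0 ≤ Φ p + Φ p.swap) : 0 ≤ ∫ p, Φ p ∂μ.prod μ := by
  have hsum : ∫ p, (Φ p + Φ p.swap) ∂μ.prod μ = 2 * ∫ p, Φ p ∂μ.prod μ := by
    rw [integral_add hΦ (hΦ.swap : Integrable (fun p => Φ p.swap) _), integral_prod_swap Φ,
      two_mul]
  linarith [integral_nonneg_of_ae h]

lemma norm_le_norm_integral_of_sq_norm_le_re_mul_conj {α : Type*} [MeasurableSpace α]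
    {ν : Measure α} [IsProbabilityMeasure ν] {F : α → ℂ} (hF : Integrable F ν) {c : ℂ}
    (h : ∀ᵐ u ∂ν, ‖c‖ ^ 2 ≤ (F u * conj c).re) : ‖c‖ ≤ ‖∫ u, F u ∂ν‖ := by
  have key : ‖c‖ * ‖c‖ ≤ ‖∫ u, F u ∂ν‖ * ‖c‖ :=
    calc ‖c‖ * ‖c‖ = ∫ _, ‖c‖ ^ 2 ∂ν := by simp [sq]
      _ ≤ ∫ u, (F u * conj c).re ∂ν :=
        integral_mono_ae (integrable_const _) (hF.mul_const _).re h
      _ = ((∫ u, F u ∂ν) * conj c).re := by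
        simpa only [RCLike.re_to_complex, integral_mul_const] using integral_re (hF.mul_const _)
      _ ≤ ‖(∫ u, F u ∂ν) * conj c‖ := re_le_norm _
      _ = ‖∫ u, F u ∂ν‖ * ‖c‖ := by rw [norm_mul, norm_conj]
  rcases (norm_nonneg c).eq_or_lt with h0 | hpos
  · rw [← h0]; exact norm_nonneg _
  · exact le_of_mul_le_mul_right key hpos

/-- The kernel `(1 - t z)⁻¹` of `𝒯` at `z = i y`, as a function of `x = t y`. -/
noncomputable def imagKernel (x : ℝ) : ℂ := (1 - x * I)⁻¹

lemma one_sub_ofReal_mul_I_ne_zero (x : ℝ) : (1 : ℂ) - x * I ≠ 0 := by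
  intro h
  simpa using congrArg re h

@[fun_prop]
lemma continuous_imagKernel : Continuous imagKernel :=
  (by fun_prop : Continuous fun x : ℝ => (1 : ℂ) - x * I).inv₀ one_sub_ofReal_mul_I_ne_zero

@[fun_prop]
lemma measurable_imagKernel : Measurable imagKernel :=
  continuous_imagKernel.measurable

lemma norm_imagKernel_le_one (x : ℝ) : ‖imagKernel x‖ ≤ 1 := by
  rw [imagKernel, norm_inv]
  apply inv_le_one_of_one_le₀
  simpa using abs_re_le_norm (1 - x * I)

lemma integrable_imagKernel_comp {α : Type*} [MeasurableSpace α] {μ : Measure α}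
    [IsFiniteMeasure μ] {g : α → ℝ} (hg : Measurable g) :
    Integrable (fun x => imagKernel (g x)) μ :=
  .of_bound (measurable_imagKernel.comp hg).aestronglyMeasurable 1
    (ae_of_all _ fun _ => norm_imagKernel_le_one _)

lemma imagKernel_eq (x : ℝ) :
    imagKernel x = ((1 / (1 + x ^ 2) : ℝ) : ℂ) + ((x / (1 + x ^ 2) : ℝ) : ℂ) * I := by
  have : (1 : ℂ) + x ^ 2 ≠ 0 := by exact_mod_cast (by positivity : (1 : ℝ) + x ^ 2 ≠ 0)
  rw [imagKernel, ← mul_eq_one_iff_inv_eq₀ (one_sub_ofReal_mul_I_ne_zero x)]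
  push_cast
  field_simp
  ring_nf
  rw [I_sq]
  ring

lemma re_imagKernel_mul_conj (a b : ℝ) :
    (imagKernel a * conj (imagKernel b)).re = (1 + a * b) / ((1 + a ^ 2) * (1 + b ^ 2)) := by
  rw [imagKernel_eq, imagKernel_eq]
  simp only [map_add, map_mul, conj_ofReal, conj_I, mul_re, add_re, add_im, ofReal_re,
    ofReal_im, I_re, I_im, mul_im, neg_re, neg_im]
  field_simp
  ring

lemma two_mul_div_le_div_add_div {a b t : ℝ} (ha : 0 ≤ a) (hb : 0 ≤ b) (ht0 : 0 ≤ t)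
    (ht1 : t ≤ 1) :
    2 * ((1 + a * b) / ((1 + a ^ 2) * (1 + b ^ 2)))
      ≤ (1 + a * t * b) / ((1 + (a * t) ^ 2) * (1 + b ^ 2))
        + (1 + b * t * a) / ((1 + (b * t) ^ 2) * (1 + a ^ 2)) := by
  rw [← sub_nonneg]
  have key : (1 + a * t * b) / ((1 + (a * t) ^ 2) * (1 + b ^ 2))
        + (1 + b * t * a) / ((1 + (b * t) ^ 2) * (1 + a ^ 2))
        - 2 * ((1 + a * b) / ((1 + a ^ 2) * (1 + b ^ 2)))
      = (1 - t) * ((a - b) ^ 2 * ((1 + t) + a * b * t * (1 - t))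
          + 2 * a * b * t * (1 + a * b + a * b * t ^ 2 + (a * b * t) ^ 2))
        / ((1 + a ^ 2) * (1 + b ^ 2) * (1 + (a * t) ^ 2) * (1 + (b * t) ^ 2)) := by
    field_simp
    ring
  have h1 : 0 ≤ 1 - t := by linarith
  have h2 : 0 ≤ (1 + t) + a * b * t * (1 - t) := by positivity
  rw [key]
  positivity

lemma re_imagKernel_sub_mul_conj_add_swap_nonneg {a b t : ℝ} (ha : 0 ≤ a) (hb : 0 ≤ b)
    (ht0 : 0 ≤ t) (ht1 : t ≤ 1) :
    0 ≤ ((imagKernel (a * t) - imagKernel a) * conj (imagKernel b)).re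
      + ((imagKernel (b * t) - imagKernel b) * conj (imagKernel a)).re := by
  have hsymm : (1 + b * a) / ((1 + b ^ 2) * (1 + a ^ 2))
      = (1 + a * b) / ((1 + a ^ 2) * (1 + b ^ 2)) := by ring
  simp only [sub_mul, sub_re, re_imagKernel_mul_conj]
  linarith [two_mul_div_le_div_add_div ha hb ht0 ht1]

lemma sq_norm_integral_imagKernel_le {μ : Measure ℝ} [IsFiniteMeasure μ] (hμ : ∀ᵐ s ∂μ, 0 ≤ s)
    {y t : ℝ} (hy : 0 ≤ y) (ht0 : 0 ≤ t) (ht1 : t ≤ 1) :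
    ‖∫ s, imagKernel (s * y) ∂μ‖ ^ 2
      ≤ ((∫ s, imagKernel (s * t * y) ∂μ) * conj (∫ s, imagKernel (s * y) ∂μ)).re := by
  set c := ∫ s, imagKernel (s * y) ∂μ
  set Φ : ℝ × ℝ → ℂ := fun p =>
    (imagKernel (p.1 * t * y) - imagKernel (p.1 * y)) * conj (imagKernel (p.2 * y))
  have hΦ : Integrable Φ (μ.prod μ) := by
    refine .of_bound (by fun_prop : Measurable Φ).aestronglyMeasurable 2 (ae_of_all _ fun p => ?_)
    calc ‖Φ p‖ ≤ (1 + 1) * 1 := by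
          rw [norm_mul, norm_conj]
          gcongr
          · exact (norm_sub_le _ _).trans (add_le_add (norm_imagKernel_le_one _)
              (norm_imagKernel_le_one _))
          · exact norm_imagKernel_le_one _
      _ = 2 := by norm_num
  have hΦ_int : ∫ p, Φ p ∂μ.prod μ = ((∫ s, imagKernel (s * t * y) ∂μ) - c) * conj c := by
    rw [integral_prod_mul (fun s => imagKernel (s * t * y) - imagKernel (s * y))
      (fun u => conj (imagKernel (u * y))), integral_conj,
      integral_sub (integrable_imagKernel_comp (by fun_prop))
        (integrable_imagKernel_comp (by fun_prop))]
  have hsymm : 0 ≤ ∫ p, (Φ p).re ∂μ.prod μ := by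
    refine integral_nonneg_of_add_swap_nonneg hΦ.re ?_
    filter_upwards [Measure.quasiMeasurePreserving_fst.ae hμ,
      Measure.quasiMeasurePreserving_snd.ae hμ] with p hs hu
    simpa only [Φ, Prod.fst_swap, Prod.snd_swap, mul_right_comm _ y t] using
      re_imagKernel_sub_mul_conj_add_swap_nonneg (mul_nonneg hs hy) (mul_nonneg hu hy) ht0 ht1
  have hre : ∫ p, (Φ p).re ∂μ.prod μ = (∫ p, Φ p ∂μ.prod μ).re := by
    simpa only [RCLike.re_to_complex] using integral_re hΦ
  rw [hre, hΦ_int, sub_mul, sub_re, mul_conj', ← ofReal_pow, ofReal_re] at hsymm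
  linarith

theorem stmt5 (μ ν ρ : Measure ℝ)
    [IsProbabilityMeasure μ] [IsProbabilityMeasure ν] [IsProbabilityMeasure ρ]
    (hμ : μ (Set.Icc (0:ℝ) 1)ᶜ = 0) (hν : ν (Set.Icc (0:ℝ) 1)ᶜ = 0)
    (hρ : ρ (Set.Icc (0:ℝ) 1)ᶜ = 0)
    (hmom : ∀ k : ℕ, (∫ t, t ^ k ∂ρ) = (∫ t, t ^ k ∂μ) * (∫ t, t ^ k ∂ν))
    (f fg : ℂ → ℂ)
    (hf : ∀ z : ℂ, f z = ∫ t, (1 - (t:ℂ) * z)⁻¹ ∂μ)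
    (hfg : ∀ z : ℂ, fg z = ∫ t, (1 - (t:ℂ) * z)⁻¹ ∂ρ)
    (y : ℝ) (hy : 0 < y) :
    ‖f (y * Complex.I)‖ ≤ ‖fg (y * Complex.I)‖ := by
  have hμ' : ∀ᵐ t ∂μ, t ∈ Icc (0 : ℝ) 1 := mem_ae_iff.mpr hμ
  have hν' : ∀ᵐ t ∂ν, t ∈ Icc (0 : ℝ) 1 := mem_ae_iff.mpr hν
  have hρ_eq : ρ = (μ.prod ν).map (fun p => p.1 * p.2) :=
    Measure.ext_of_integral_pow_eq (mem_ae_iff.mpr hρ) (ae_mem_Icc_map_mul_prod hμ' hν')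
      fun k => by rw [hmom, integral_pow_map_mul_prod]
  have hkernel : ∀ t : ℝ, (1 - (t : ℂ) * (y * I))⁻¹ = imagKernel (t * y) := fun t => by
    rw [imagKernel, ofReal_mul, mul_assoc]
  have hint : Integrable (fun p : ℝ × ℝ => imagKernel (p.1 * p.2 * y)) (μ.prod ν) :=
    integrable_imagKernel_comp (by fun_prop)
  simp_rw [hf, hfg, hkernel, hρ_eq]
  rw [integral_map (by fun_prop) (by fun_prop), integral_prod_symm _ hint]
  refine norm_le_norm_integral_of_sq_norm_le_re_mul_conj hint.integral_prod_right ?_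
  filter_upwards [hν'] with u hu
  exact sq_norm_integral_imagKernel_le (hμ'.mono fun s hs => hs.1) hy.le hu.1 hu.2
end
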